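/- arXiv:2307.03622 — 5 statements merged into one kernel-verified Lean document; each statement's English description precedes it below -/
import Mathlib

section
/- Let X be a real Banach space. The norm of the dual space X* is non rough if and only if X has the Ball Dentable Property (BDP). -/
/-!
A slice `S(B_X, f, α)` and the w*-slice `S(B_{X**}, f, α)` cut by the same functional `f ∈ X*` have
the same diameter. The canonical embedding `X → X**` is an isometry carrying the first into the
second. Conversely, by Helly's lemma (separation in `ℝ²`) every `F ∈ B_{X**}` is approximated by
points of `B_X` simultaneously on `f` and on any other `g ∈ X*`; since the slice condition is
open, two points of the w*-slice are approximated in this way by two points of `S(B_X, f, α)`, and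
choosing `g` to almost norm their difference bounds their distance by the diameter of that slice.
With the diameters equal, "some w*-slice of `B_{X**}` is small" and "some slice of `B_X` is small"
are the same statement.
-/

open Metric NormedSpace ENNReal

section Defs

variable (Z : Type*) [NormedAddCommGroup Z] [NormedSpace ℝ Z]

/-- The w*-slice of the closed unit ball of the dual of `Z` determined by `z : Z` and `α > 0`:
`S(B_{Z*}, z, α) = {f ∈ B_{Z*} : f(z) > sup_{g ∈ B_{Z*}} g(z) − α}`. -/
def wStarSlice (z : Z) (α : ℝ) : Set (StrongDual ℝ Z) :=
  {f | f ∈ closedBall (0 : StrongDual ℝ Z) 1 ∧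
    f z > sSup ((fun g : StrongDual ℝ Z => g z) '' closedBall (0 : StrongDual ℝ Z) 1) - α}

/-- The norm of `Z` is `ε`-rough: every w*-slice of `B_{Z*}` has diameter at least `ε`. -/
def EpsRough (ε : ℝ) : Prop :=
  ∀ (z : Z) (α : ℝ), 0 < α → ε ≤ diam (wStarSlice Z z α)

/-- The norm of `Z` is non rough: it is not `ε`-rough for any `ε > 0`. -/
def NonRough : Prop := ∀ ε > 0, ¬ EpsRough Z ε

/-- `Z*` has the w*-Ball Dentable Property. -/
def WStarBDP : Prop :=
  ∀ ε > 0, ∃ (z : Z) (α : ℝ), 0 < α ∧ diam (wStarSlice Z z α) < ε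

/-- `V` is a (relatively) w*-open subset of the closed unit ball `B_{Z*}`. -/
def IsRelWStarOpen (V : Set (StrongDual ℝ Z)) : Prop :=
  ∃ U : Set (WeakDual ℝ Z), IsOpen U ∧
    V = {f | f ∈ closedBall (0 : StrongDual ℝ Z) 1 ∧ StrongDual.toWeakDual f ∈ U}

/-- The norm of `Z` is weakly `ε`-average rough: every nonempty relatively w*-open
subset of `B_{Z*}` has diameter at least `ε`. -/
def WeaklyEpsAvgRough (ε : ℝ) : Prop :=
  ∀ V : Set (StrongDual ℝ Z), IsRelWStarOpen Z V → V.Nonempty → ε ≤ diam V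

/-- The norm of `Z` is weakly average non rough. -/
def WeaklyAvgNonRough : Prop := ∀ ε > 0, ¬ WeaklyEpsAvgRough Z ε

/-- `Z*` has the w*-Ball Huskable Property. -/
def WStarBHP : Prop :=
  ∀ ε > 0, ∃ V : Set (StrongDual ℝ Z), IsRelWStarOpen Z V ∧ V.Nonempty ∧ diam V < ε

/-- `D` is a convex combination of w*-slices of `B_{Z*}`, i.e. `D = ∑ λᵢ Sᵢ` (Minkowski sum)
with each `Sᵢ` a w*-slice, `λᵢ > 0`, `∑ λᵢ = 1`. -/
def IsConvexCombWStarSlices (D : Set (StrongDual ℝ Z)) : Prop :=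
  ∃ (n : ℕ) (l : Fin n → ℝ) (z : Fin n → Z) (α : Fin n → ℝ),
    (∀ i, 0 < l i) ∧ (∑ i, l i) = 1 ∧ (∀ i, 0 < α i) ∧
    D = {f | ∃ g : Fin n → StrongDual ℝ Z,
      (∀ i, g i ∈ wStarSlice Z (z i) (α i)) ∧ f = ∑ i, l i • g i}

/-- The norm of `Z` is `ε`-average rough: every convex combination of w*-slices of `B_{Z*}`
has diameter at least `ε`. -/
def EpsAvgRough (ε : ℝ) : Prop :=
  ∀ D : Set (StrongDual ℝ Z), IsConvexCombWStarSlices Z D → ε ≤ diam D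

/-- The norm of `Z` is average non rough. -/
def AvgNonRough : Prop := ∀ ε > 0, ¬ EpsAvgRough Z ε

/-- `Z*` has the w*-Ball Small Combination of Slice Property. -/
def WStarBSCSP : Prop :=
  ∀ ε > 0, ∃ D : Set (StrongDual ℝ Z), IsConvexCombWStarSlices Z D ∧ diam D < ε

/-- A slice of the closed unit ball `B_Z` determined by `f ∈ Z*` and `α > 0`. -/
def ballSlice (f : StrongDual ℝ Z) (α : ℝ) : Set Z :=
  {x | x ∈ closedBall (0 : Z) 1 ∧ f x > sSup (f '' closedBall (0 : Z) 1) - α}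

/-- `Z` has the Ball Dentable Property. -/
def BDP : Prop :=
  ∀ ε > 0, ∃ (f : StrongDual ℝ Z) (α : ℝ), 0 < α ∧ diam (ballSlice Z f α) < ε

/-- `V` is a nonempty relatively weakly open subset of the closed unit ball `B_Z`. -/
def IsRelWeakOpen (V : Set Z) : Prop :=
  ∃ U : Set (WeakSpace ℝ Z), IsOpen U ∧
    V = {x | x ∈ closedBall (0 : Z) 1 ∧ toWeakSpace ℝ Z x ∈ U}

/-- `Z` has the Ball Huskable Property. -/
def BHP : Prop :=
  ∀ ε > 0, ∃ V : Set Z, IsRelWeakOpen Z V ∧ V.Nonempty ∧ diam V < ε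

/-- `D` is a convex combination of slices of `B_Z`. -/
def IsConvexCombSlices (D : Set Z) : Prop :=
  ∃ (n : ℕ) (l : Fin n → ℝ) (f : Fin n → StrongDual ℝ Z) (α : Fin n → ℝ),
    (∀ i, 0 < l i) ∧ (∑ i, l i) = 1 ∧ (∀ i, 0 < α i) ∧
    D = {x | ∃ g : Fin n → Z,
      (∀ i, g i ∈ ballSlice Z (f i) (α i)) ∧ x = ∑ i, l i • g i}

/-- `Z` has the Ball Small Combination of Slice Property. -/
def BSCSP : Prop :=
  ∀ ε > 0, ∃ D : Set Z, IsConvexCombSlices Z D ∧ diam D < ε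

variable {Z}

/-- The closed unit ball of a subspace `F` of the dual, viewed as a subset of the dual. -/
def subBall (F : Submodule ℝ (StrongDual ℝ Z)) : Set (StrongDual ℝ Z) :=
  {f | f ∈ F ∧ ‖f‖ ≤ 1}

/-- The w*-slice of `B_F` determined by `z : Z` and `α`. -/
def subWStarSlice (F : Submodule ℝ (StrongDual ℝ Z)) (z : Z) (α : ℝ) : Set (StrongDual ℝ Z) :=
  {f | f ∈ subBall F ∧ f z > sSup ((fun g : StrongDual ℝ Z => g z) '' subBall F) - α}

/-- The subspace `F` of `Z*` has the w*-Ball Dentable Property. -/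
def SubWStarBDP (F : Submodule ℝ (StrongDual ℝ Z)) : Prop :=
  ∀ ε > 0, ∃ (z : Z) (α : ℝ), 0 < α ∧ diam (subWStarSlice F z α) < ε

/-- `V` is a relatively w*-open subset of `B_F`. -/
def IsRelWStarOpenSub (F : Submodule ℝ (StrongDual ℝ Z)) (V : Set (StrongDual ℝ Z)) : Prop :=
  ∃ U : Set (WeakDual ℝ Z), IsOpen U ∧
    V = {f | f ∈ subBall F ∧ StrongDual.toWeakDual f ∈ U}

/-- The subspace `F` of `Z*` has the w*-Ball Huskable Property. -/
def SubWStarBHP (F : Submodule ℝ (StrongDual ℝ Z)) : Prop :=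
  ∀ ε > 0, ∃ V : Set (StrongDual ℝ Z), IsRelWStarOpenSub F V ∧ V.Nonempty ∧ diam V < ε

/-- `D` is a convex combination of w*-slices of `B_F`. -/
def IsConvexCombSubWStarSlices (F : Submodule ℝ (StrongDual ℝ Z)) (D : Set (StrongDual ℝ Z)) : Prop :=
  ∃ (n : ℕ) (l : Fin n → ℝ) (z : Fin n → Z) (α : Fin n → ℝ),
    (∀ i, 0 < l i) ∧ (∑ i, l i) = 1 ∧ (∀ i, 0 < α i) ∧
    D = {f | ∃ g : Fin n → StrongDual ℝ Z,
      (∀ i, g i ∈ subWStarSlice F (z i) (α i)) ∧ f = ∑ i, l i • g i}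

/-- The subspace `F` of `Z*` has the w*-Ball Small Combination of Slice Property. -/
def SubWStarBSCSP (F : Submodule ℝ (StrongDual ℝ Z)) : Prop :=
  ∀ ε > 0, ∃ D : Set (StrongDual ℝ Z), IsConvexCombSubWStarSlices F D ∧ diam D < ε

/-- The annihilator `Y^⊥ = {f ∈ Z* : f(y) = 0 for all y ∈ Y}` of a subspace `Y` of `Z`. -/
noncomputable def annih (Y : Submodule ℝ Z) : Submodule ℝ (StrongDual ℝ Z) where
  carrier := {f | ∀ y ∈ Y, f y = 0}
  add_mem' := by intro f g hf hg y hy; simp [hf y hy, hg y hy]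
  zero_mem' := by intro y hy; simp
  smul_mem' := by intro c f hf y hy; simp [hf y hy]

end Defs

section SliceDiameter

variable {E : Type*} [NormedAddCommGroup E] [NormedSpace ℝ E]

theorem StrongDual.sSup_image_closedBall_eq_norm (φ : StrongDual ℝ E) :
    sSup (φ '' closedBall 0 1) = ‖φ‖ := by
  refine csSup_eq_of_forall_le_of_forall_lt_exists_gt
    ((nonempty_closedBall.2 zero_le_one).image _) ?_ fun c hc => ?_
  · rintro - ⟨x, hx, rfl⟩
    calc φ x ≤ ‖φ x‖ := le_abs_self _
    _ ≤ ‖φ‖ * ‖x‖ := φ.le_opNorm x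
    _ ≤ ‖φ‖ := mul_le_of_le_one_right (norm_nonneg φ) (mem_closedBall_zero_iff.1 hx)
  · obtain ⟨x, hx, hcx⟩ := φ.exists_lt_apply_of_lt_opNorm hc
    rcases le_or_gt 0 (φ x) with hpos | hneg
    · exact ⟨φ x, ⟨x, ball_subset_closedBall (mem_ball_zero_iff.2 hx), rfl⟩, by
        rwa [Real.norm_of_nonneg hpos] at hcx⟩
    · refine ⟨φ (-x), ⟨-x, ?_, rfl⟩, ?_⟩
      · simpa using hx.le
      · rwa [map_neg, ← abs_of_neg hneg, ← Real.norm_eq_abs]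

theorem StrongDual.norm_le_of_forall_apply_le {φ : StrongDual ℝ E} {u : ℝ}
    (h : ∀ x ∈ closedBall (0 : E) 1, φ x ≤ u) : ‖φ‖ ≤ u := by
  rw [← φ.sSup_image_closedBall_eq_norm]
  exact csSup_le ((nonempty_closedBall.2 zero_le_one).image _) (Set.forall_mem_image.2 h)

theorem StrongDual.exists_mem_closedBall_lt_apply {φ : StrongDual ℝ E} {c : ℝ} (h : c < ‖φ‖) :
    ∃ x ∈ closedBall (0 : E) 1, c < φ x := by
  rw [← φ.sSup_image_closedBall_eq_norm] at h
  obtain ⟨-, ⟨x, hx, rfl⟩, hcx⟩ := exists_lt_of_lt_csSup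
    ((nonempty_closedBall.2 zero_le_one).image _) h
  exact ⟨x, hx, hcx⟩

theorem sSup_image_eval_closedBall_eq_norm (z : E) :
    sSup ((fun g : StrongDual ℝ E => g z) '' closedBall 0 1) = ‖z‖ :=
  ((inclusionInDoubleDual ℝ E z).sSup_image_closedBall_eq_norm).trans
    ((inclusionInDoubleDualLi ℝ).norm_map z)

theorem mem_ballSlice_iff {f : StrongDual ℝ E} {α : ℝ} {x : E} :
    x ∈ ballSlice E f α ↔ ‖x‖ ≤ 1 ∧ ‖f‖ - α < f x := by
  rw [ballSlice, Set.mem_ofPred_eq, f.sSup_image_closedBall_eq_norm, mem_closedBall_zero_iff,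
    gt_iff_lt]

theorem mem_wStarSlice_iff {z : E} {α : ℝ} {F : StrongDual ℝ E} :
    F ∈ wStarSlice E z α ↔ ‖F‖ ≤ 1 ∧ ‖z‖ - α < F z := by
  rw [wStarSlice, Set.mem_ofPred_eq, sSup_image_eval_closedBall_eq_norm, mem_closedBall_zero_iff,
    gt_iff_lt]

theorem bidual_apply_comp_prod (F : StrongDual ℝ (StrongDual ℝ E)) (φ : StrongDual ℝ (ℝ × ℝ))
    (f g : StrongDual ℝ E) : F (φ ∘L f.prod g) = φ (F f, F g) := by
  have hφ : ∀ a b : ℝ, φ (a, b) = a * φ (1, 0) + b * φ (0, 1) := fun a b => by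
    rw [show ((a, b) : ℝ × ℝ) = a • (1, 0) + b • (0, 1) by simp, map_add, map_smul, map_smul,
      smul_eq_mul, smul_eq_mul]
  have hcomp : φ ∘L f.prod g = φ (1, 0) • f + φ (0, 1) • g := by
    ext x
    simp only [ContinuousLinearMap.comp_apply, ContinuousLinearMap.prod_apply, hφ (f x),
      add_apply, FunLike.coe_smul, Pi.smul_apply, smul_eq_mul]
    ring
  rw [hcomp, map_add, map_smul, map_smul, hφ (F f)]
  simp only [smul_eq_mul]
  ring

theorem mem_closure_image_prod_closedBall {F : StrongDual ℝ (StrongDual ℝ E)} (hF : ‖F‖ ≤ 1)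
    (f g : StrongDual ℝ E) : (F f, F g) ∈ closure (f.prod g '' closedBall 0 1) := by
  by_contra hFfg
  have hconv : Convex ℝ (closure (f.prod g '' closedBall (0 : E) 1)) :=
    ((convex_closedBall 0 1).linear_image (f.prod g : E →ₗ[ℝ] ℝ × ℝ)).closure
  obtain ⟨φ, u, hball, hFu⟩ := geometric_hahn_banach_closed_point hconv isClosed_closure hFfg
  have hnorm : ‖φ ∘L f.prod g‖ ≤ u := StrongDual.norm_le_of_forall_apply_le fun x hx =>
    (hball _ (subset_closure ⟨x, hx, rfl⟩)).le
  have hle : F (φ ∘L f.prod g) ≤ u :=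
    (le_abs_self _).trans <| (F.le_of_opNorm_le hF _).trans <| by rw [one_mul]; exact hnorm
  rw [bidual_apply_comp_prod] at hle
  exact hle.not_gt hFu

theorem exists_mem_closedBall_lt_apply_lt_apply {F : StrongDual ℝ (StrongDual ℝ E)}
    (hF : ‖F‖ ≤ 1) {f g : StrongDual ℝ E} {a b : ℝ} (ha : a < F f) (hb : b < F g) :
    ∃ x ∈ closedBall (0 : E) 1, a < f x ∧ b < g x := by
  obtain ⟨-, hab, x, hx, rfl⟩ := mem_closure_iff_nhds.1 (mem_closure_image_prod_closedBall hF f g)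
    _ ((isOpen_lt continuous_const continuous_fst).inter (isOpen_lt continuous_const continuous_snd)
      |>.mem_nhds ⟨ha, hb⟩)
  exact ⟨x, hx, hab⟩

theorem isBounded_ballSlice (f : StrongDual ℝ E) (α : ℝ) :
    Bornology.IsBounded (ballSlice E f α) :=
  isBounded_closedBall.subset fun _ hx => hx.1

theorem isBounded_wStarSlice (z : E) (α : ℝ) :
    Bornology.IsBounded (wStarSlice E z α) :=
  isBounded_closedBall.subset fun _ hF => hF.1

theorem mapsTo_inclusionInDoubleDual_ballSlice (f : StrongDual ℝ E) (α : ℝ) :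
    Set.MapsTo (inclusionInDoubleDual ℝ E) (ballSlice E f α) (wStarSlice (StrongDual ℝ E) f α) :=
  fun x hx => by
    rw [mem_ballSlice_iff] at hx
    exact mem_wStarSlice_iff.2 ⟨(double_dual_bound ℝ E x).trans hx.1, hx.2⟩

theorem dist_le_diam_ballSlice_of_mem_wStarSlice {f : StrongDual ℝ E} {α : ℝ}
    {F G : StrongDual ℝ (StrongDual ℝ E)} (hF : F ∈ wStarSlice (StrongDual ℝ E) f α)
    (hG : G ∈ wStarSlice (StrongDual ℝ E) f α) : dist F G ≤ diam (ballSlice E f α) := by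
  rw [mem_wStarSlice_iff] at hF hG
  rw [dist_eq_norm F G]
  refine le_of_forall_pos_le_add fun ε hε => ?_
  obtain ⟨g, hg, hgFG⟩ := StrongDual.exists_mem_closedBall_lt_apply
    (show ‖F - G‖ - ε / 3 < ‖F - G‖ by linarith)
  obtain ⟨x, hx, hfx, hgx⟩ := exists_mem_closedBall_lt_apply_lt_apply hF.1 hF.2
    (show F g - ε / 3 < F g by linarith)
  obtain ⟨y, hy, hfy, hgy⟩ := exists_mem_closedBall_lt_apply_lt_apply hG.1 hG.2
    (show -G g - ε / 3 < G (-g) by rw [map_neg]; linarith)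
  have hxy : g x - g y ≤ diam (ballSlice E f α) :=
    calc g x - g y = g (x - y) := (map_sub g x y).symm
    _ ≤ ‖x - y‖ := (le_abs_self _).trans <| (g.le_of_opNorm_le
        (mem_closedBall_zero_iff.1 hg) _).trans_eq (one_mul _)
    _ ≤ diam (ballSlice E f α) := by
        rw [← dist_eq_norm]
        exact dist_le_diam_of_mem (isBounded_ballSlice f α)
          (mem_ballSlice_iff.2 ⟨mem_closedBall_zero_iff.1 hx, hfx⟩)
          (mem_ballSlice_iff.2 ⟨mem_closedBall_zero_iff.1 hy, hfy⟩)
  rw [sub_apply] at hgFG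
  rw [neg_apply] at hgy
  linarith

theorem diam_wStarSlice_eq_diam_ballSlice (f : StrongDual ℝ E) (α : ℝ) :
    diam (wStarSlice (StrongDual ℝ E) f α) = diam (ballSlice E f α) := by
  refine le_antisymm (diam_le_of_forall_dist_le diam_nonneg fun F hF G hG =>
    dist_le_diam_ballSlice_of_mem_wStarSlice hF hG) ?_
  rw [← (inclusionInDoubleDualLi ℝ (E := E)).isometry.diam_image]
  exact diam_mono (mapsTo_inclusionInDoubleDual_ballSlice f α).image_subset
    (isBounded_wStarSlice _ _)

end SliceDiameter

theorem statement_3_general (X : Type*) [NormedAddCommGroup X] [NormedSpace ℝ X] :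
    NonRough (StrongDual ℝ X) ↔ BDP X := by
  simp only [NonRough, EpsRough, BDP, diam_wStarSlice_eq_diam_ballSlice, not_forall, not_le,
    exists_prop]

/-- The norm of `X*` is non rough if and only if `X` has the Ball Dentable
Property. -/
theorem statement_3 (X : Type*) [NormedAddCommGroup X] [NormedSpace ℝ X] [CompleteSpace X] :
    NonRough (StrongDual ℝ X) ↔ BDP X :=
  statement_3_general X
end

section
/- Let X be a real Banach space. The norm of the dual space X* is weakly average non rough if and only if X has the Ball Huskable Property (BHP). -/
open Metric NormedSpace ENNReal

/-!
By Goldstine's theorem, if a w*-open set `U ⊆ X**` meets `B_{X**}`, then `B_{X**} ∩ U` lies in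
the w*-closure of the trace `B_X ∩ U` of `U` on the canonically embedded unit ball of `X`; as
evaluations at points of `X*` are w*-continuous, this closure has the same diameter as the
trace, so `diam (B_X ∩ U) = diam (B_{X**} ∩ U)` and both sets are empty or nonempty together.
The weak topology of `X` is induced by the w*-topology of `X**`, so every relatively weakly
open subset of `B_X` is such a trace, and the two properties say the same thing.
-/

instance WeakDual.instLocallyConvexSpace {E : Type*} [AddCommGroup E] [TopologicalSpace E]
    [Module ℝ E] : LocallyConvexSpace ℝ (WeakDual ℝ E) :=
  WeakBilin.locallyConvexSpace

namespace NormedSpace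

variable {X : Type*} [NormedAddCommGroup X] [NormedSpace ℝ X]

theorem norm_le_of_forall_mem_closedBall_lt {f : StrongDual ℝ X} {u : ℝ}
    (hf : ∀ x ∈ closedBall (0 : X) 1, f x < u) : ‖f‖ ≤ u := by
  have hu : 0 < u := by simpa using hf 0 (mem_closedBall_self zero_le_one)
  refine f.opNorm_le_of_unit_norm hu.le fun x hx => ?_
  have h₁ := hf x (mem_closedBall_zero_iff.2 hx.le)
  have h₂ := hf (-x) (by simpa using hx.le)
  rw [map_neg] at h₂
  exact (Real.norm_eq_abs _).trans_le (abs_le.2 ⟨by linarith, h₁.le⟩)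

/-- Goldstine's theorem. -/
theorem toWeakDual_closedBall_subset_closure_image_closedBall :
    StrongDual.toWeakDual '' closedBall (0 : StrongDual ℝ (StrongDual ℝ X)) 1 ⊆
      closure (inclusionInDoubleDualWeak ℝ X ∘ toWeakSpace ℝ X '' closedBall 0 1) := by
  rintro _ ⟨F, hF, rfl⟩
  by_contra hFK
  have hK : Convex ℝ
      (closure (inclusionInDoubleDualWeak ℝ X ∘ toWeakSpace ℝ X '' closedBall 0 1)) :=
    ((convex_closedBall (0 : X) 1).linear_image
      ((inclusionInDoubleDualWeak ℝ X).toLinearMap ∘ₗ (toWeakSpace ℝ X).toLinearMap)).closure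
  obtain ⟨φ, u, hφK, hφF⟩ := geometric_hahn_banach_closed_point hK isClosed_closure hFK
  -- the w*-continuous functionals on `X**` are the evaluations at points of `X*`
  obtain ⟨f, rfl⟩ := LinearMap.dualEmbedding_surjective _ φ
  have hfu : ‖f‖ ≤ u :=
    norm_le_of_forall_mem_closedBall_lt fun x hx => hφK _ (subset_closure ⟨x, hx, rfl⟩)
  have hFf : F f ≤ ‖f‖ := by
    calc F f ≤ ‖F‖ * ‖f‖ := (le_abs_self _).trans (F.le_opNorm f)
      _ ≤ ‖f‖ := mul_le_of_le_one_left (norm_nonneg f)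
        ((mem_closedBall_zero_iff (E := StrongDual ℝ (StrongDual ℝ X))).1 hF)
  exact hφF.not_ge (hFf.trans hfu)

theorem norm_sub_le_diam_of_mem_closure {W : Set X} (hW : Bornology.IsBounded W)
    {F G : StrongDual ℝ (StrongDual ℝ X)}
    (hF : StrongDual.toWeakDual F ∈
      closure (inclusionInDoubleDualWeak ℝ X ∘ toWeakSpace ℝ X '' W))
    (hG : StrongDual.toWeakDual G ∈
      closure (inclusionInDoubleDualWeak ℝ X ∘ toWeakSpace ℝ X '' W)) :
    ‖F - G‖ ≤ diam W := by
  refine (F - G).opNorm_le_bound diam_nonneg fun f => ?_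
  have hmaps : Set.MapsTo (fun H : WeakDual ℝ (StrongDual ℝ X) => H f)
      (inclusionInDoubleDualWeak ℝ X ∘ toWeakSpace ℝ X '' W) (f '' W) := by
    rintro _ ⟨x, hx, rfl⟩
    exact ⟨x, hx, rfl⟩
  have hFf := map_mem_closure (WeakDual.eval_continuous f) hF hmaps
  have hGf := map_mem_closure (WeakDual.eval_continuous f) hG hmaps
  have hfW : Bornology.IsBounded (f '' W) := f.lipschitz.isBounded_image hW
  calc ‖(F - G) f‖ = dist (F f) (G f) := rfl
    _ ≤ diam (closure (f '' W)) := dist_le_diam_of_mem hfW.closure hFf hGf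
    _ = diam (f '' W) := diam_closure _
    _ ≤ ‖f‖ * diam W := f.lipschitz.diam_image_le W hW
    _ = diam W * ‖f‖ := mul_comm _ _

theorem inclusionInDoubleDualLi_mem_closedBall {x : X} (hx : x ∈ closedBall 0 1) :
    inclusionInDoubleDualLi ℝ x ∈ closedBall 0 1 :=
  (mem_closedBall_zero_iff (E := StrongDual ℝ (StrongDual ℝ X))).2 <|
    ((inclusionInDoubleDualLi ℝ).norm_map x).trans_le (mem_closedBall_zero_iff.1 hx)

variable {U : Set (WeakDual ℝ (StrongDual ℝ X))}

theorem mem_closure_image_closedBall_inter_preimage (hU : IsOpen U)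
    {F : StrongDual ℝ (StrongDual ℝ X)} (hF : F ∈ closedBall 0 1)
    (hFU : StrongDual.toWeakDual F ∈ U) :
    StrongDual.toWeakDual F ∈ closure (inclusionInDoubleDualWeak ℝ X ∘ toWeakSpace ℝ X ''
      {x | x ∈ closedBall 0 1 ∧
        toWeakSpace ℝ X x ∈ inclusionInDoubleDualWeak ℝ X ⁻¹' U}) := by
  have := hU.inter_closure
    ⟨hFU, toWeakDual_closedBall_subset_closure_image_closedBall ⟨F, hF, rfl⟩⟩
  rwa [Set.inter_comm, ← Set.image_inter_preimage] at this

theorem nonempty_closedBall_inter_preimage_iff (hU : IsOpen U) :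
    {x | x ∈ closedBall (0 : X) 1 ∧
        toWeakSpace ℝ X x ∈ inclusionInDoubleDualWeak ℝ X ⁻¹' U}.Nonempty ↔
      {F | F ∈ closedBall (0 : StrongDual ℝ (StrongDual ℝ X)) 1 ∧
        StrongDual.toWeakDual F ∈ U}.Nonempty := by
  refine ⟨fun ⟨x, hx, hxU⟩ => ⟨_, inclusionInDoubleDualLi_mem_closedBall hx, hxU⟩,
    fun ⟨F, hF, hFU⟩ => ?_⟩
  simpa using
    closure_nonempty_iff.1 ⟨_, mem_closure_image_closedBall_inter_preimage hU hF hFU⟩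

theorem diam_closedBall_inter_preimage_eq (hU : IsOpen U) :
    diam {x | x ∈ closedBall (0 : X) 1 ∧
        toWeakSpace ℝ X x ∈ inclusionInDoubleDualWeak ℝ X ⁻¹' U} =
      diam {F | F ∈ closedBall (0 : StrongDual ℝ (StrongDual ℝ X)) 1 ∧
        StrongDual.toWeakDual F ∈ U} := by
  have hW : Bornology.IsBounded
      {x | x ∈ closedBall (0 : X) 1 ∧
        toWeakSpace ℝ X x ∈ inclusionInDoubleDualWeak ℝ X ⁻¹' U} :=
    isBounded_closedBall.subset fun _ hx => hx.1
  refine le_antisymm ?_ (diam_le_of_forall_dist_le diam_nonneg fun F hF G hG => ?_)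
  · rw [← (inclusionInDoubleDualLi ℝ).isometry.diam_image]
    refine diam_mono ?_ (isBounded_closedBall.subset fun _ hF => hF.1)
    rintro _ ⟨x, ⟨hx, hxU⟩, rfl⟩
    exact ⟨inclusionInDoubleDualLi_mem_closedBall hx, hxU⟩
  · exact (dist_eq_norm F G).trans_le <| norm_sub_le_diam_of_mem_closure hW
      (mem_closure_image_closedBall_inter_preimage hU hF.1 hF.2)
      (mem_closure_image_closedBall_inter_preimage hU hG.1 hG.2)

end NormedSpace

theorem statement_4_general (X : Type*) [NormedAddCommGroup X] [NormedSpace ℝ X] :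
    WeaklyAvgNonRough (StrongDual ℝ X) ↔ BHP X := by
  constructor
  · intro h ε hε
    obtain ⟨_, ⟨U, hU, rfl⟩, hne, hdiam⟩ :
        ∃ V, IsRelWStarOpen (StrongDual ℝ X) V ∧ V.Nonempty ∧ diam V < ε := by
      simpa [WeaklyEpsAvgRough] using h ε hε
    exact ⟨_, ⟨_, hU.preimage (inclusionInDoubleDualWeak ℝ X).continuous, rfl⟩,
      (nonempty_closedBall_inter_preimage_iff hU).2 hne,
      (diam_closedBall_inter_preimage_eq hU).trans_lt hdiam⟩
  · intro h ε hε hrough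
    obtain ⟨_, ⟨U, hU, rfl⟩, hne, hdiam⟩ := h ε hε
    obtain ⟨U', hU', rfl⟩ := (isEmbedding_inclusionInDoubleDualWeak ℝ X).isOpen_iff.1 hU
    have := hrough _ ⟨U', hU', rfl⟩ ((nonempty_closedBall_inter_preimage_iff hU').1 hne)
    rw [← diam_closedBall_inter_preimage_eq hU'] at this
    exact this.not_gt hdiam

/-- The norm of `X*` is weakly average non rough if and only if `X` has the Ball
Huskable Property. -/
theorem statement_4 (X : Type*) [NormedAddCommGroup X] [NormedSpace ℝ X] [CompleteSpace X] :
    WeaklyAvgNonRough (StrongDual ℝ X) ↔ BHP X :=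
  statement_4_general X
end

section
/- Let X and Y be real Banach spaces. The norm of the direct sum X ⊕₁ Y (product space with norm ‖(x,y)‖ = ‖x‖ + ‖y‖) is weakly average non rough if and only if both the norm of X and the norm of Y are weakly average non rough. -/
open Metric NormedSpace ENNReal

/-!
The dual of `X ⊕₁ Y` is `X* ⊕∞ Y*` via `f ↦ (f ∘ inl, f ∘ inr)`, and both restrictions are
w*-continuous. So small relatively w*-open sets `V_X ⊆ B_{X*}`, `V_Y ⊆ B_{Y*}` give the relatively
w*-open set `{f ∈ B_{(X ⊕₁ Y)*} : f ∘ inl ∈ V_X, f ∘ inr ∈ V_Y}`, of diameter at most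
`max (diam V_X) (diam V_Y)`. Conversely, if a small relatively w*-open `V ⊆ B_{(X ⊕₁ Y)*}` contains
`f₀`, then `g ↦ g ∘ P + f₀ ∘ (1 - J P)` (with `J = inl`, `P = fst`) is a w*-continuous map
`B_{X*} → B_{(X ⊕₁ Y)*}` that does not decrease distances and hits `f₀`, so the preimage of `V` is
small; this only needs `X` to be an L-summand.
-/

open Metric Set WeakDual

section

variable {E F : Type*} [NormedAddCommGroup E] [NormedSpace ℝ E]
  [NormedAddCommGroup F] [NormedSpace ℝ F]

lemma weaklyAvgNonRough_iff_wStarBHP : WeaklyAvgNonRough E ↔ WStarBHP E := by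
  simp only [WeaklyAvgNonRough, WeaklyEpsAvgRough, WStarBHP, not_forall, not_le, exists_prop]

lemma continuous_toWeakDual_comp (T : E →L[ℝ] F) :
    Continuous fun g : WeakDual ℝ F => StrongDual.toWeakDual ((toStrongDual g).comp T) :=
  continuous_of_continuous_eval fun x => eval_continuous (T x)

lemma mapsTo_comp_closedBall {T : E →L[ℝ] F} (hT : ‖T‖ ≤ 1) :
    MapsTo (fun f : StrongDual ℝ F => f.comp T) (closedBall 0 1) (closedBall 0 1) := by
  intro f hf
  rw [mem_closedBall_zero_iff] at hf ⊢
  exact (f.opNorm_comp_le T).trans (mul_le_one₀ hf (norm_nonneg _) hT)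

namespace IsRelWStarOpen

lemma subset_closedBall {V : Set (StrongDual ℝ E)} (hV : IsRelWStarOpen E V) :
    V ⊆ closedBall 0 1 := by
  obtain ⟨U, -, rfl⟩ := hV
  exact fun f hf => hf.1

lemma isBounded {V : Set (StrongDual ℝ E)} (hV : IsRelWStarOpen E V) : Bornology.IsBounded V :=
  isBounded_closedBall.subset hV.subset_closedBall

lemma inter {V W : Set (StrongDual ℝ E)} (hV : IsRelWStarOpen E V) (hW : IsRelWStarOpen E W) :
    IsRelWStarOpen E (V ∩ W) := by
  obtain ⟨U, hU, rfl⟩ := hV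
  obtain ⟨U', hU', rfl⟩ := hW
  refine ⟨U ∩ U', hU.inter hU', ?_⟩
  ext f
  simp only [mem_inter_iff, mem_ofPred_eq]
  tauto

lemma preimage {Φ : StrongDual ℝ E → StrongDual ℝ F}
    (hΦ : Continuous fun g : WeakDual ℝ E => StrongDual.toWeakDual (Φ (toStrongDual g)))
    (hΦB : MapsTo Φ (closedBall 0 1) (closedBall 0 1)) {V : Set (StrongDual ℝ F)}
    (hV : IsRelWStarOpen F V) : IsRelWStarOpen E (closedBall 0 1 ∩ Φ ⁻¹' V) := by
  obtain ⟨U, hU, rfl⟩ := hV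
  refine ⟨_, hU.preimage hΦ, ?_⟩
  ext g
  simp only [mem_inter_iff, mem_preimage, mem_ofPred_eq]
  exact ⟨fun h => ⟨h.1, h.2.2⟩, fun h => ⟨h.1, hΦB h.1, h.2⟩⟩

end IsRelWStarOpen

lemma WStarBHP.of_isLSummand (J : E →L[ℝ] F) (P : F →L[ℝ] E) (hPJ : ∀ x, P (J x) = x)
    (hnorm : ∀ z, ‖z‖ = ‖P z‖ + ‖z - J (P z)‖) (h : WStarBHP F) : WStarBHP E := by
  have hJ : ‖J‖ ≤ 1 := J.opNorm_le_bound zero_le_one fun x => by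
    simpa [hPJ] using (hnorm (J x)).le
  intro ε hε
  obtain ⟨V, hV, ⟨f₀, hf₀⟩, hdiam⟩ := h ε hε
  have hf₀B : ‖f₀‖ ≤ 1 := mem_closedBall_zero_iff.mp (hV.subset_closedBall hf₀)
  -- `Φ g` agrees with `g` on `E` and with `f₀` on the complementary summand.
  set Φ : StrongDual ℝ E → StrongDual ℝ F :=
    fun g => g.comp P + f₀.comp (ContinuousLinearMap.id ℝ F - J.comp P) with hΦ
  have hΦB : MapsTo Φ (closedBall 0 1) (closedBall 0 1) := by
    intro g hg
    rw [mem_closedBall_zero_iff] at hg ⊢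
    refine ContinuousLinearMap.opNorm_le_bound _ zero_le_one fun z => ?_
    calc ‖Φ g z‖ ≤ ‖g (P z)‖ + ‖f₀ (z - J (P z))‖ := norm_add_le _ _
      _ ≤ 1 * ‖P z‖ + 1 * ‖z - J (P z)‖ := by
        gcongr
        · exact g.le_of_opNorm_le hg _
        · exact f₀.le_of_opNorm_le hf₀B _
      _ = 1 * ‖z‖ := by rw [hnorm z]; ring
  have hΦcont : Continuous fun g : WeakDual ℝ E => StrongDual.toWeakDual (Φ (toStrongDual g)) := by
    simp only [hΦ, map_add]
    exact (continuous_toWeakDual_comp P).add continuous_const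
  have hΦf₀ : Φ (f₀.comp J) = f₀ := by
    ext z
    simp [hΦ]
  have hΦdist : ∀ g g', dist g g' ≤ dist (Φ g) (Φ g') := by
    intro g g'
    have hrestrict : g - g' = (Φ g - Φ g').comp J := by
      ext x
      simp [hΦ, hPJ]
    rw [dist_eq_norm, dist_eq_norm, hrestrict]
    exact (ContinuousLinearMap.opNorm_comp_le _ _).trans (mul_le_of_le_one_right (norm_nonneg _) hJ)
  refine ⟨closedBall 0 1 ∩ Φ ⁻¹' V, hV.preimage hΦcont hΦB, ⟨f₀.comp J, ?_, ?_⟩, ?_⟩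
  · exact mapsTo_comp_closedBall hJ (hV.subset_closedBall hf₀)
  · rwa [mem_preimage, hΦf₀]
  · refine (diam_le_of_forall_dist_le diam_nonneg fun g hg g' hg' => ?_).trans_lt hdiam
    exact (hΦdist g g').trans (dist_le_diam_of_mem hV.isBounded hg.2 hg'.2)

namespace WithLp

variable (E F) in
noncomputable def inlL : E →L[ℝ] WithLp 1 (E × F) :=
  (prodContinuousLinearEquiv 1 ℝ E F).symm.toContinuousLinearMap ∘L ContinuousLinearMap.inl ℝ E F

variable (E F) in
noncomputable def inrL : F →L[ℝ] WithLp 1 (E × F) :=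
  (prodContinuousLinearEquiv 1 ℝ E F).symm.toContinuousLinearMap ∘L ContinuousLinearMap.inr ℝ E F

@[simp] lemma inlL_apply (x : E) : inlL E F x = toLp 1 (x, 0) := rfl

@[simp] lemma inrL_apply (y : F) : inrL E F y = toLp 1 (0, y) := rfl

variable (E F) in
lemma inlL_norm_le_one : ‖inlL E F‖ ≤ 1 :=
  (inlL E F).opNorm_le_bound zero_le_one fun x => by simp

variable (E F) in
lemma inrL_norm_le_one : ‖inrL E F‖ ≤ 1 :=
  (inrL E F).opNorm_le_bound zero_le_one fun y => by simp

lemma norm_eq_norm_fstL_add_norm_sub_inlL (z : WithLp 1 (E × F)) :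
    ‖z‖ = ‖fstL 1 ℝ E F z‖ + ‖z - inlL E F (fstL 1 ℝ E F z)‖ := by
  have hsub : z - inlL E F (fstL 1 ℝ E F z) = toLp 1 (0, z.snd) :=
    ofLp_injective 1 <| by ext <;> simp
  rw [hsub, norm_toLp_snd, prod_norm_eq_of_L1, fstL_apply]

lemma norm_eq_norm_sndL_add_norm_sub_inrL (z : WithLp 1 (E × F)) :
    ‖z‖ = ‖sndL 1 ℝ E F z‖ + ‖z - inrL E F (sndL 1 ℝ E F z)‖ := by
  have hsub : z - inrL E F (sndL 1 ℝ E F z) = toLp 1 (z.fst, 0) :=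
    ofLp_injective 1 <| by ext <;> simp
  rw [hsub, norm_toLp_fst, prod_norm_eq_of_L1, sndL_apply, add_comm]

lemma norm_le_max_norm_comp_inlL_norm_comp_inrL (f : StrongDual ℝ (WithLp 1 (E × F))) :
    ‖f‖ ≤ max ‖f.comp (inlL E F)‖ ‖f.comp (inrL E F)‖ := by
  set M := max ‖f.comp (inlL E F)‖ ‖f.comp (inrL E F)‖
  refine f.opNorm_le_bound (le_max_of_le_left (norm_nonneg _)) fun z => ?_
  have hz : z = inlL E F z.fst + inrL E F z.snd := ofLp_injective 1 <| by ext <;> simp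
  calc ‖f z‖ = ‖f.comp (inlL E F) z.fst + f.comp (inrL E F) z.snd‖ := by
        rw [hz]; simp
    _ ≤ ‖f.comp (inlL E F)‖ * ‖z.fst‖ + ‖f.comp (inrL E F)‖ * ‖z.snd‖ :=
        (norm_add_le _ _).trans (add_le_add ((f.comp _).le_opNorm _) ((f.comp _).le_opNorm _))
    _ ≤ M * ‖z.fst‖ + M * ‖z.snd‖ := by
        gcongr
        exacts [le_max_left _ _, le_max_right _ _]
    _ = M * ‖z‖ := by rw [prod_norm_eq_of_L1]; ring

lemma exists_dual_comp_inlL_comp_inrL (p : StrongDual ℝ E) (q : StrongDual ℝ F) :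
    ∃ f : StrongDual ℝ (WithLp 1 (E × F)),
      f.comp (inlL E F) = p ∧ f.comp (inrL E F) = q ∧ ‖f‖ ≤ max ‖p‖ ‖q‖ := by
  have hl : (p.comp (fstL 1 ℝ E F) + q.comp (sndL 1 ℝ E F)).comp (inlL E F) = p := by
    ext; simp
  have hr : (p.comp (fstL 1 ℝ E F) + q.comp (sndL 1 ℝ E F)).comp (inrL E F) = q := by
    ext; simp
  refine ⟨_, hl, hr, ?_⟩
  simpa only [hl, hr] using norm_le_max_norm_comp_inlL_norm_comp_inrL
    (p.comp (fstL 1 ℝ E F) + q.comp (sndL 1 ℝ E F))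

end WithLp

open WithLp in
lemma WStarBHP.withLpOne (hE : WStarBHP E) (hF : WStarBHP F) : WStarBHP (WithLp 1 (E × F)) := by
  intro ε hε
  obtain ⟨VE, hVE, ⟨p, hp⟩, hdE⟩ := hE ε hε
  obtain ⟨VF, hVF, ⟨q, hq⟩, hdF⟩ := hF ε hε
  have hVE' := hVE.preimage (continuous_toWeakDual_comp (inlL E F))
    (mapsTo_comp_closedBall (inlL_norm_le_one E F))
  have hVF' := hVF.preimage (continuous_toWeakDual_comp (inrL E F))
    (mapsTo_comp_closedBall (inrL_norm_le_one E F))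
  obtain ⟨f, hfp, hfq, hf⟩ := exists_dual_comp_inlL_comp_inrL p q
  have hfB : f ∈ closedBall 0 1 := mem_closedBall_zero_iff.mpr <| hf.trans <|
    max_le (mem_closedBall_zero_iff.mp (hVE.subset_closedBall hp))
      (mem_closedBall_zero_iff.mp (hVF.subset_closedBall hq))
  refine ⟨_, hVE'.inter hVF', ⟨f, ⟨hfB, ?_⟩, ⟨hfB, ?_⟩⟩, ?_⟩
  · simpa [hfp] using hp
  · simpa [hfq] using hq
  refine (diam_le_of_forall_dist_le (diam_nonneg.trans (le_max_left _ _))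
    fun g hg g' hg' => ?_).trans_lt (max_lt hdE hdF)
  rw [dist_eq_norm]
  refine (norm_le_max_norm_comp_inlL_norm_comp_inrL _).trans (max_le_max ?_ ?_)
  · rw [ContinuousLinearMap.sub_comp, ← dist_eq_norm]
    exact dist_le_diam_of_mem hVE.isBounded hg.1.2 hg'.1.2
  · rw [ContinuousLinearMap.sub_comp, ← dist_eq_norm]
    exact dist_le_diam_of_mem hVF.isBounded hg.2.2 hg'.2.2

end

theorem statement_7_general (X Y : Type*) [NormedAddCommGroup X] [NormedSpace ℝ X]
    [NormedAddCommGroup Y] [NormedSpace ℝ Y] :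
    WeaklyAvgNonRough (WithLp 1 (X × Y)) ↔ (WeaklyAvgNonRough X ∧ WeaklyAvgNonRough Y) := by
  simp only [weaklyAvgNonRough_iff_wStarBHP]
  refine ⟨fun h => ⟨?_, ?_⟩, fun h => h.1.withLpOne h.2⟩
  · exact h.of_isLSummand (WithLp.inlL X Y) (WithLp.fstL 1 ℝ X Y) (fun _ => rfl)
      WithLp.norm_eq_norm_fstL_add_norm_sub_inlL
  · exact h.of_isLSummand (WithLp.inrL X Y) (WithLp.sndL 1 ℝ X Y) (fun _ => rfl)
      WithLp.norm_eq_norm_sndL_add_norm_sub_inrL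

/-- The norm of `X ⊕₁ Y` is weakly average non rough iff both the norms of `X`
and `Y` are weakly average non rough. -/
theorem statement_7 (X Y : Type*) [NormedAddCommGroup X] [NormedSpace ℝ X] [CompleteSpace X]
    [NormedAddCommGroup Y] [NormedSpace ℝ Y] [CompleteSpace Y] :
    WeaklyAvgNonRough (WithLp 1 (X × Y)) ↔ (WeaklyAvgNonRough X ∧ WeaklyAvgNonRough Y) :=
  statement_7_general X Y
end

section
/- Let X be a real Banach space, Y a closed subspace of X, and P : X* → X* a continuous linear projection (P ∘ P = P) with ‖P‖ = 1, range equal to the annihilator Y^⊥, and finite-dimensional kernel. If Y^⊥ has the w*-BDP, then X* has the w*-BDP. -/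
open Metric NormedSpace ENNReal

/-!
Let `S(B_{Y^⊥}, z, α)` be a slice of diameter `< ε/2` and `N = ker P`, so that `X* = Y^⊥ ⊕ N`
with `N` finite-dimensional and `N ∩ Y^⊥ = 0`. The latter makes every functional on `N` the
evaluation at a point of `Y`, hence every functional `f ↦ Pf(z) + φ(f - Pf)` on `X*` is the
evaluation at a point of `X`. The image `K` of `B_{X*}` under `f ↦ (Pf(z), f - Pf)` is a bounded
subset of `ℝ × N` whose first coordinate has supremum `sup_{B_{Y^⊥}} g(z)`. Choose, in Euclidean
coordinates, a point `v₀` of maximal norm on the top face of the closure of `K`; tilting the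
first coordinate by `t⟪v₀, ·⟫` with `t → 0` gives slices of `K` which, by compactness and
strict convexity of the Euclidean norm, lie near the top face and near `v₀`. The corresponding
w*-slice of `B_{X*}` has its `Y^⊥`-part in `S(B_{Y^⊥}, z, α)` and its `N`-part in a small ball.
-/

open Filter Bornology Set
open scoped RealInnerProductSpace Topology

section Localization

variable {V : Type*}

theorem eq_of_norm_le_of_sq_norm_le_inner [NormedAddCommGroup V] [InnerProductSpace ℝ V]
    {v w : V} (hn : ‖w‖ ≤ ‖v‖) (hi : ‖v‖ ^ 2 ≤ ⟪v, w⟫) : w = v := by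
  have h : ‖w - v‖ ^ 2 ≤ 0 := by
    rw [norm_sub_sq_real, real_inner_comm]
    nlinarith [norm_nonneg w, norm_nonneg v]
  rw [← sub_eq_zero, ← norm_eq_zero]
  exact pow_eq_zero_iff two_ne_zero |>.mp (le_antisymm h (sq_nonneg _))

theorem exists_tilted_slice_of_exposed [NormedAddCommGroup V] [InnerProductSpace ℝ V]
    {K : Set (ℝ × V)} (hK : IsCompact K) {s : ℝ} (hs : ∀ p ∈ K, p.1 ≤ s) {v₀ : V}
    (hv₀K : (s, v₀) ∈ K) (hv₀ : ∀ q ∈ K, q.1 = s → ⟪v₀, v₀⟫ ≤ ⟪v₀, q.2⟫ → q.2 = v₀)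
    {α ε : ℝ} (hα : 0 < α) (hε : 0 < ε) :
    ∃ t β : ℝ, 0 < β ∧ ∀ p ∈ K, s + t * ⟪v₀, v₀⟫ - β < p.1 + t * ⟪v₀, p.2⟫ →
      s - α < p.1 ∧ ‖p.2 - v₀‖ < ε := by
  obtain ⟨M, hM⟩ := hK.bddAbove_image (f := fun p => ⟪v₀, p.2⟫) (by fun_prop)
  have hM' : ∀ p ∈ K, ⟪v₀, p.2⟫ ≤ M := fun p hp => hM (mem_image_of_mem _ hp)
  set c := M - ⟪v₀, v₀⟫ + 1
  have hc : 1 ≤ c := by linarith [hM' _ hv₀K]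
  set τ : ℕ → ℝ := fun k => 1 / ((k : ℝ) + 1)
  have hτ : ∀ k, 0 < τ k ∧ τ k ≤ 1 := fun k =>
    ⟨by positivity, div_le_one_of_le₀ (by linarith [k.cast_nonneg (α := ℝ)]) (by positivity)⟩
  have hτanti : Antitone τ := fun k l hkl => by
    simp only [τ]; gcongr
  have hτlim (a b : ℝ) : Tendsto (fun k => a - b * τ k) atTop (𝓝 a) := by
    simpa [τ] using tendsto_const_nhds.sub (tendsto_one_div_add_atTop_nhds_zero_nat.const_mul b)
  by_contra! hbad
  -- `A k` relaxes the failure of the conclusion for `t = τ k`, `β = τ k ^ 2` to closed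
  -- conditions that decrease with `k`.
  set A : ℕ → Set (ℝ × V) := fun k => K ∩ {p | (p.1 ≤ s - α ∨ ε ≤ ‖p.2 - v₀‖) ∧
    s - c * τ k ≤ p.1 ∧ ⟪v₀, v₀⟫ - τ k ≤ ⟪v₀, p.2⟫}
  have hA_anti : ∀ k, A (k + 1) ⊆ A k := by
    rintro k p ⟨hpK, hbad, h1, h2⟩
    have := hτanti k.le_succ
    exact ⟨hpK, hbad, by nlinarith, by linarith⟩
  have hA_ne : ∀ k, (A k).Nonempty := by
    intro k
    obtain ⟨ht, ht1⟩ := hτ k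
    obtain ⟨p, hpK, hpgt, hpbad⟩ := hbad (τ k) (τ k ^ 2) (by positivity)
    have hps := hs p hpK
    refine ⟨p, hpK, ?_, by nlinarith [hM' p hpK], by nlinarith⟩
    by_cases h : s - α < p.1
    · exact Or.inr (hpbad h)
    · exact Or.inl (not_lt.mp h)
  have hA_closed : ∀ k, IsClosed (A k) := fun k => by
    simp only [A, ofPred_and, ofPred_or]
    exact hK.isClosed.inter (((isClosed_le (by fun_prop) (by fun_prop)).union
      (isClosed_le (by fun_prop) (by fun_prop))).inter
      ((isClosed_le (by fun_prop) (by fun_prop)).inter (isClosed_le (by fun_prop) (by fun_prop))))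
  obtain ⟨q, hq⟩ := IsCompact.nonempty_iInter_of_sequence_nonempty_isCompact_isClosed A hA_anti
    hA_ne (hK.of_isClosed_subset (hA_closed 0) inter_subset_left) hA_closed
  simp only [mem_iInter] at hq
  obtain ⟨hqK, hqbad, -, -⟩ := hq 0
  have hq1 : q.1 = s := le_antisymm (hs q hqK)
    (le_of_tendsto' (hτlim s c) fun k => (hq k).2.2.1)
  have hq2 : q.2 = v₀ := hv₀ q hqK hq1 <| le_of_tendsto' (hτlim _ 1) fun k => by
    simpa using (hq k).2.2.2
  rw [hq1, hq2, sub_self, norm_zero] at hqbad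
  rcases hqbad with h | h <;> linarith

theorem exists_localizing_functional_of_inner [NormedAddCommGroup V] [InnerProductSpace ℝ V]
    {K : Set (ℝ × V)} (hK : IsCompact K) {s : ℝ} (hs : ∀ p ∈ K, p.1 ≤ s)
    (hmem : ∃ v, (s, v) ∈ K) {α ε : ℝ} (hα : 0 < α) (hε : 0 < ε) :
    ∃ (v₀ : V) (φ : V →L[ℝ] ℝ) (β : ℝ), 0 < β ∧ (s, v₀) ∈ K ∧
      ∀ p ∈ K, s + φ v₀ - β < p.1 + φ p.2 → s - α < p.1 ∧ ‖p.2 - v₀‖ < ε := by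
  obtain ⟨v, hv⟩ := hmem
  obtain ⟨p₀, ⟨hp₀K, hp₀s⟩, hp₀max⟩ := (hK.inter_right (isClosed_eq continuous_fst
    continuous_const)).exists_isMaxOn ⟨(s, v), hv, rfl⟩
    (continuous_norm.comp continuous_snd).continuousOn
  have hv₀K : (s, p₀.2) ∈ K := by
    convert hp₀K
    exact hp₀s.symm
  have hexposed : ∀ q ∈ K, q.1 = s → ⟪p₀.2, p₀.2⟫ ≤ ⟪p₀.2, q.2⟫ → q.2 = p₀.2 :=
    fun q hqK hq1 hq2 => eq_of_norm_le_of_sq_norm_le_inner (hp₀max ⟨hqK, hq1⟩)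
      (by rwa [← real_inner_self_eq_norm_sq])
  obtain ⟨t, β, hβ, hloc⟩ := exists_tilted_slice_of_exposed hK hs hv₀K hexposed hα hε
  exact ⟨p₀.2, t • innerSL ℝ p₀.2, β, hβ, hv₀K, fun p hp hpgt => hloc p hp (by simpa using hpgt)⟩

theorem exists_localizing_functional [NormedAddCommGroup V] [NormedSpace ℝ V]
    [FiniteDimensional ℝ V] {K : Set (ℝ × V)} (hK : IsCompact K) {s : ℝ}
    (hs : ∀ p ∈ K, p.1 ≤ s) (hmem : ∃ v, (s, v) ∈ K) {α ε : ℝ} (hα : 0 < α) (hε : 0 < ε) :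
    ∃ (v₀ : V) (φ : V →L[ℝ] ℝ) (β : ℝ), 0 < β ∧ (s, v₀) ∈ K ∧
      ∀ p ∈ K, s + φ v₀ - β < p.1 + φ p.2 → s - α < p.1 ∧ ‖p.2 - v₀‖ < ε := by
  let e : V ≃L[ℝ] EuclideanSpace ℝ (Fin (Module.finrank ℝ V)) := toEuclidean
  set C := ‖e.symm.toContinuousLinearMap‖
  obtain ⟨v, hv⟩ := hmem
  obtain ⟨w₀, φ, β, hβ, ⟨p₀, hp₀K, hp₀⟩, hloc⟩ :=
    exists_localizing_functional_of_inner (hK.image (continuous_id.prodMap e.continuous))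
      (s := s) (forall_mem_image.mpr fun p hp => hs p hp) ⟨e v, mem_image_of_mem _ hv⟩ hα
      (div_pos hε (by positivity : 0 < C + 1))
  obtain ⟨rfl, rfl⟩ := Prod.ext_iff.mp hp₀
  refine ⟨p₀.2, φ.comp (e : V →L[ℝ] _), β, hβ, by simpa using hp₀K, fun p hp hpgt => ?_⟩
  obtain ⟨h1, h2⟩ := hloc _ (mem_image_of_mem _ hp) (by simpa using hpgt)
  refine ⟨h1, ?_⟩
  calc ‖p.2 - p₀.2‖ = ‖e.symm (e p.2 - e p₀.2)‖ := by simp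
    _ ≤ C * ‖e p.2 - e p₀.2‖ := e.symm.toContinuousLinearMap.le_opNorm _
    _ ≤ C * (ε / (C + 1)) := by gcongr; simpa using h2.le
    _ < ε := by
      rw [mul_div_assoc', div_lt_iff₀ (by positivity)]
      nlinarith

theorem sSup_image_closure_eq {E : Type*} [TopologicalSpace E] {K : Set E}
    (hK : IsCompact (closure K)) {g : E → ℝ} (hg : Continuous g) :
    sSup (g '' closure K) = sSup (g '' K) := by
  rw [image_closure_of_isCompact hK hg.continuousOn]
  rcases (g '' K).eq_empty_or_nonempty with h | h
  · simp [h]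
  have hb : BddAbove (g '' K) := (hK.image hg).bddAbove.mono (image_mono subset_closure)
  exact ((isLUB_iff_of_subset_of_subset_closure subset_closure subset_rfl).mp
    (isLUB_csSup h hb)).csSup_eq h.closure

theorem exists_localizing_functional_of_isBounded [NormedAddCommGroup V] [NormedSpace ℝ V]
    [FiniteDimensional ℝ V] {K : Set (ℝ × V)} (hK : IsBounded K) (hne : K.Nonempty)
    {α ε : ℝ} (hα : 0 < α) (hε : 0 < ε) :
    ∃ (v₀ : V) (φ : V →L[ℝ] ℝ) (β : ℝ), 0 < β ∧
      ∀ p ∈ K, sSup ((fun q => q.1 + φ q.2) '' K) - β < p.1 + φ p.2 →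
        sSup (Prod.fst '' K) - α < p.1 ∧ ‖p.2 - v₀‖ < ε := by
  have hKc := hK.isCompact_closure
  obtain ⟨p₀, hp₀, hsup, hmax⟩ :=
    hKc.exists_sSup_image_eq_and_ge hne.closure continuous_fst.continuousOn
  obtain ⟨v₀, φ, β, hβ, hv₀, hloc⟩ := exists_localizing_functional hKc hmax ⟨p₀.2, hp₀⟩ hα hε
  refine ⟨v₀, φ, β, hβ, fun p hp hpgt => ?_⟩
  have hL : Continuous fun q : ℝ × V => q.1 + φ q.2 := by fun_prop
  have hsupL : p₀.1 + φ v₀ ≤ sSup ((fun q => q.1 + φ q.2) '' K) := by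
    rw [← sSup_image_closure_eq hKc hL]
    exact le_csSup (hKc.image hL).bddAbove (mem_image_of_mem _ hv₀)
  rw [← sSup_image_closure_eq hKc continuous_fst, hsup]
  exact hloc p (subset_closure hp) (by linarith)

end Localization

section Projection

variable {E : Type*} [NormedAddCommGroup E] [NormedSpace ℝ E]

def kerProj (P : E →L[ℝ] E) (hP : ∀ f, P (P f) = P f) :
    E →L[ℝ] LinearMap.ker (P : E →ₗ[ℝ] E) :=
  (ContinuousLinearMap.id ℝ E - P).codRestrict _ fun f => by simp [hP]

@[simp]
theorem coe_kerProj_apply (P : E →L[ℝ] E) (hP : ∀ f, P (P f) = P f) (f : E) :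
    (kerProj P hP f : E) = f - P f :=
  rfl

theorem disjoint_ker_range_of_idempotent {P : E →L[ℝ] E} (hP : ∀ f, P (P f) = P f) :
    Disjoint (LinearMap.ker (P : E →ₗ[ℝ] E)) (LinearMap.range (P : E →ₗ[ℝ] E)) := by
  rw [Submodule.disjoint_def]
  rintro _ hker ⟨g, rfl⟩
  simpa [hP] using hker

theorem diam_le_of_forall_mem_of_dist_kerProj_le {P : E →L[ℝ] E} (hP : ∀ f, P (P f) = P f)
    {S T : Set E} (hT : IsBounded T) {w₀ : LinearMap.ker (P : E →ₗ[ℝ] E)} {δ : ℝ} (hδ : 0 ≤ δ)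
    (h : ∀ f ∈ S, P f ∈ T ∧ dist (kerProj P hP f) w₀ ≤ δ) : diam S ≤ diam T + 2 * δ := by
  refine diam_le_of_forall_dist_le (add_nonneg diam_nonneg (by positivity)) fun f hf f' hf' => ?_
  obtain ⟨hPf, hQf⟩ := h f hf
  obtain ⟨hPf', hQf'⟩ := h f' hf'
  have hQ : dist (kerProj P hP f) (kerProj P hP f') ≤ 2 * δ := by
    linarith [dist_triangle_right (kerProj P hP f) (kerProj P hP f') w₀]
  calc dist f f' = dist (P f + kerProj P hP f) (P f' + kerProj P hP f') := by simp
    _ ≤ dist (P f) (P f') + dist (kerProj P hP f) (kerProj P hP f') := dist_add_add_le _ _ _ _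
    _ ≤ diam T + 2 * δ := add_le_add (dist_le_diam_of_mem hT hPf hPf') hQ

end Projection

section DualProjection

variable {X : Type*} [NormedAddCommGroup X] [NormedSpace ℝ X]

theorem exists_mem_forall_apply_eq {Y : Submodule ℝ X} {N : Submodule ℝ (StrongDual ℝ X)}
    [FiniteDimensional ℝ N] (hN : Disjoint N (annih Y)) (ψ : Module.Dual ℝ N) :
    ∃ y ∈ Y, ∀ n : N, (n : StrongDual ℝ X) y = ψ n := by
  let B : N →ₗ[ℝ] Y →ₗ[ℝ] ℝ :=
    Y.subtype.dualMap ∘ₗ ContinuousLinearMap.coeLM ℝ ∘ₗ N.subtype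
  have hB : Function.Injective B := fun a b hab => by
    have hY : ((a - b : N) : StrongDual ℝ X) ∈ annih Y := fun y hy => by
      simpa [sub_eq_zero, B] using LinearMap.congr_fun hab ⟨y, hy⟩
    simpa [sub_eq_zero] using hN.le_bot ⟨(a - b).2, hY⟩
  obtain ⟨y, hy⟩ := (LinearMap.flip_surjective_iff₁ (V₁ := N) (V₂ := Y) (B := B)).mpr hB ψ
  exact ⟨y, y.2, fun n => LinearMap.congr_fun hy n⟩

theorem exists_apply_eq_apply_add_apply_kerProj {Y : Submodule ℝ X}
    {P : StrongDual ℝ X →L[ℝ] StrongDual ℝ X} (hP : ∀ f, P (P f) = P f)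
    (hrange : LinearMap.range (P : StrongDual ℝ X →ₗ[ℝ] StrongDual ℝ X) = annih Y)
    [FiniteDimensional ℝ (LinearMap.ker (P : StrongDual ℝ X →ₗ[ℝ] StrongDual ℝ X))] (z : X)
    (φ : LinearMap.ker (P : StrongDual ℝ X →ₗ[ℝ] StrongDual ℝ X) →L[ℝ] ℝ) :
    ∃ x : X, ∀ f : StrongDual ℝ X, f x = P f z + φ (kerProj P hP f) := by
  obtain ⟨y, hyY, hy⟩ := exists_mem_forall_apply_eq (hrange ▸ disjoint_ker_range_of_idempotent hP)
    ((ContinuousLinearMap.apply ℝ ℝ z).toLinearMap ∘ₗ Submodule.subtype _ - φ.toLinearMap)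
  refine ⟨z - y, fun f => ?_⟩
  have hPf : P f y = 0 := (hrange ▸ LinearMap.mem_range.mpr ⟨f, rfl⟩ : P f ∈ annih Y) y hyY
  have hQf := hy (kerProj P hP f)
  simp only [coe_kerProj_apply, sub_apply, LinearMap.sub_apply, LinearMap.coe_comp,
    Function.comp_apply, Submodule.subtype_apply, ContinuousLinearMap.coe_coe,
    ContinuousLinearMap.apply_apply] at hQf
  rw [map_sub]
  linarith

theorem image_closedBall_eq_subBall {P : StrongDual ℝ X →L[ℝ] StrongDual ℝ X}
    (hP : ∀ f, P (P f) = P f) (hPnorm : ‖P‖ ≤ 1) :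
    P '' closedBall 0 1 = subBall (LinearMap.range (P : StrongDual ℝ X →ₗ[ℝ] StrongDual ℝ X)) := by
  ext g
  constructor
  · rintro ⟨f, hf, rfl⟩
    exact ⟨⟨f, rfl⟩, (P.le_opNorm f).trans
      (mul_le_one₀ hPnorm (norm_nonneg f) (mem_closedBall_zero_iff.mp hf))⟩
  · rintro ⟨⟨f, rfl⟩, hg⟩
    exact ⟨P f, mem_closedBall_zero_iff.mpr hg, hP f⟩

end DualProjection

theorem statement_14_general (X : Type*) [NormedAddCommGroup X] [NormedSpace ℝ X]
    (Y : Submodule ℝ X)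
    (P : StrongDual ℝ X →L[ℝ] StrongDual ℝ X) (hProj : ∀ f, P (P f) = P f) (hPnorm : ‖P‖ = 1)
    (hrange : LinearMap.range (P : StrongDual ℝ X →ₗ[ℝ] StrongDual ℝ X) = annih Y)
    (hker : FiniteDimensional ℝ (LinearMap.ker (P : StrongDual ℝ X →ₗ[ℝ] StrongDual ℝ X)))
    (hBDP : SubWStarBDP (annih Y)) :
    WStarBDP X := by
  intro ε hε
  obtain ⟨z, α, hα, hT⟩ := hBDP (ε / 2) (by positivity)
  set Q := kerProj P hProj
  set Φ := ((ContinuousLinearMap.apply ℝ ℝ z).comp P).prod Q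
  set K := Φ '' closedBall 0 1
  obtain ⟨w₀, φ, β, hβ, hloc⟩ := exists_localizing_functional_of_isBounded (K := K)
    (Φ.lipschitz.isBounded_image isBounded_closedBall)
    ((nonempty_closedBall.2 zero_le_one).image Φ) hα (by positivity : 0 < ε / 4)
  obtain ⟨x, hx⟩ := exists_apply_eq_apply_add_apply_kerProj hProj hrange z φ
  have hball : P '' closedBall 0 1 = subBall (annih Y) :=
    hrange ▸ image_closedBall_eq_subBall hProj hPnorm.le
  have hsupx : sSup ((fun f : StrongDual ℝ X => f x) '' closedBall 0 1) =
      sSup ((fun q => q.1 + φ q.2) '' K) := by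
    simp only [K, image_image, Φ, hx]
    rfl
  have hsupz : sSup (Prod.fst '' K) = sSup ((fun g => g z) '' subBall (annih Y)) := by
    rw [← hball, image_image, image_image]
    rfl
  have hslice : ∀ f ∈ wStarSlice X x β,
      P f ∈ subWStarSlice (annih Y) z α ∧ dist (Q f) w₀ ≤ ε / 4 := fun f ⟨hf, hfx⟩ => by
    obtain ⟨h1, h2⟩ := hloc (Φ f) (mem_image_of_mem _ hf) (by simpa [← hsupx, Φ, hx] using hfx)
    exact ⟨⟨hball ▸ mem_image_of_mem P hf, hsupz ▸ h1⟩, (dist_eq_norm _ _).trans_le h2.le⟩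
  have hT_bdd : IsBounded (subWStarSlice (annih Y) z α) :=
    isBounded_closedBall.subset fun g hg => mem_closedBall_zero_iff.mpr hg.1.2
  refine ⟨x, β, hβ, ?_⟩
  calc diam (wStarSlice X x β) ≤ diam (subWStarSlice (annih Y) z α) + 2 * (ε / 4) :=
        diam_le_of_forall_mem_of_dist_kerProj_le hProj hT_bdd (by positivity) hslice
    _ < ε := by linarith

/-- If `P : X* → X*` is a norm one continuous linear projection with range `Y^⊥`
and finite-dimensional kernel, and `Y^⊥` has the w*-BDP, then `X*` has the w*-BDP. -/
theorem statement_14 (X : Type*) [NormedAddCommGroup X] [NormedSpace ℝ X] [CompleteSpace X]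
    (Y : Submodule ℝ X) (hY : IsClosed (Y : Set X))
    (P : StrongDual ℝ X →L[ℝ] StrongDual ℝ X) (hProj : ∀ f, P (P f) = P f) (hPnorm : ‖P‖ = 1)
    (hrange : LinearMap.range (P : StrongDual ℝ X →ₗ[ℝ] StrongDual ℝ X) = annih Y)
    (hker : FiniteDimensional ℝ (LinearMap.ker (P : StrongDual ℝ X →ₗ[ℝ] StrongDual ℝ X)))
    (hBDP : SubWStarBDP (annih Y)) :
    WStarBDP X :=
  statement_14_general X Y P hProj hPnorm hrange hker hBDP
end

section
/- Let X be a real Banach space and Y a closed subspace of X such that the quotient space X*/Y^⊥ is finite dimensional. If the annihilator Y^⊥ has the w*-BHP, then X* has the w*-BHP. -/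
open Metric NormedSpace ENNReal

/-!
Since `Y^⊥` is the kernel of the (Hahn–Banach surjective) restriction map `X* → Y*`, the space
`Y*` is finite dimensional, so the restriction map is w*-to-norm continuous. Given a small
nonempty relatively w*-open subset `V` of `B_{Y^⊥}`, shrink the w*-open set cutting out `V` so
that it absorbs norm perturbations of size `2δ`, and intersect it with `{g : ‖g|_Y‖ < δ}`. A functional `g` in the resulting w*-open subset `W` of
`B_{X*}` is corrected to `(1 + δ)⁻¹ (g - h) ∈ B_{Y^⊥}`, where `h` is a norm-preserving
extension of `g|_Y`; this moves `g` by at most `2δ` and lands in `V`, so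
`diam W ≤ diam V + 4δ`.
-/

open WeakDual

lemma Metric.diam_le_diam_add_of_forall_exists_dist_le {α : Type*} [PseudoMetricSpace α]
    {s t : Set α} (ht : Bornology.IsBounded t) {η : ℝ} (hη : 0 ≤ η)
    (h : ∀ x ∈ s, ∃ y ∈ t, dist x y ≤ η) : diam s ≤ diam t + 2 * η := by
  refine diam_le_of_forall_dist_le (by positivity) fun x hx x' hx' => ?_
  obtain ⟨y, hy, hxy⟩ := h x hx
  obtain ⟨y', hy', hxy'⟩ := h x' hx'
  calc dist x x' ≤ dist x y + dist y y' + dist y' x' := dist_triangle4 x y y' x'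
    _ ≤ η + diam t + η := by
        gcongr
        · exact dist_le_diam_of_mem ht hy hy'
        · rwa [dist_comm]
    _ = diam t + 2 * η := by ring

section Restriction

variable {X : Type*} [NormedAddCommGroup X] [NormedSpace ℝ X] (Y : Submodule ℝ X)

noncomputable def dualRestrict : StrongDual ℝ X →ₗ[ℝ] StrongDual ℝ Y where
  toFun f := f.comp Y.subtypeL
  map_add' _ _ := rfl
  map_smul' _ _ := rfl

@[simp]
lemma dualRestrict_apply (f : StrongDual ℝ X) (y : Y) : dualRestrict Y f y = f y := rfl

lemma dualRestrict_surjective : Function.Surjective (dualRestrict Y) := fun φ => by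
  obtain ⟨g, hg, -⟩ := exists_extension_norm_eq Y φ
  exact ⟨g, ContinuousLinearMap.ext hg⟩

lemma ker_dualRestrict : LinearMap.ker (dualRestrict Y) = annih Y := by
  ext f
  simp only [LinearMap.mem_ker, ContinuousLinearMap.ext_iff, dualRestrict_apply,
    zero_apply, Subtype.forall]
  rfl

lemma finiteDimensional_dual_of_finiteDimensional_quotient_annih
    [FiniteDimensional ℝ (StrongDual ℝ X ⧸ annih Y)] : FiniteDimensional ℝ (StrongDual ℝ Y) :=
  Module.Finite.equiv <| (Submodule.quotEquivOfEq _ _ (ker_dualRestrict Y).symm).trans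
    (LinearMap.quotKerEquivOfSurjective _ (dualRestrict_surjective Y))

lemma continuous_dualRestrict_toStrongDual [FiniteDimensional ℝ (StrongDual ℝ Y)] :
    Continuous fun p : WeakDual ℝ X => dualRestrict Y (toStrongDual p) := by
  have hweak : Continuous fun p : WeakDual ℝ X =>
      StrongDual.toWeakDual (dualRestrict Y (toStrongDual p)) :=
    continuous_of_continuous_eval fun y => eval_continuous (y : X)
  have : FiniteDimensional ℝ (WeakDual ℝ Y) := ‹FiniteDimensional ℝ (StrongDual ℝ Y)›
  exact (LinearMap.continuous_of_finiteDimensional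
    (toStrongDual : WeakDual ℝ Y ≃ₗ[ℝ] _).toLinearMap).comp hweak

lemma exists_mem_subBall_annih_norm_sub_le {g : StrongDual ℝ X} (hg : ‖g‖ ≤ 1) :
    ∃ f ∈ subBall (annih Y), ‖g - f‖ ≤ 2 * ‖dualRestrict Y g‖ := by
  set δ := ‖dualRestrict Y g‖
  obtain ⟨h, hext, hnorm⟩ := exists_extension_norm_eq Y (dualRestrict Y g)
  have hδ : 0 ≤ δ := norm_nonneg (dualRestrict Y g)
  set c := (1 + δ)⁻¹
  have hc : 0 < c := by positivity
  have hc1 : c * (1 + δ) = 1 := inv_mul_cancel₀ (by positivity)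
  have hgh : g - h ∈ annih Y := fun y hy => sub_eq_zero.mpr (hext ⟨y, hy⟩).symm
  refine ⟨c • (g - h), ⟨(annih Y).smul_mem c hgh, ?_⟩, ?_⟩
  · calc ‖c • (g - h)‖ = c * ‖g - h‖ := by rw [norm_smul, Real.norm_of_nonneg hc.le]
      _ ≤ c * (‖g‖ + ‖h‖) := by gcongr; exact norm_sub_le g h
      _ ≤ c * (1 + δ) := by gcongr; exact hnorm.le
      _ = 1 := hc1
  · calc ‖g - c • (g - h)‖ = ‖(1 - c) • g + c • h‖ := by congr 1; module
      _ ≤ (1 - c) * ‖g‖ + c * ‖h‖ := by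
          refine (norm_add_le _ _).trans_eq ?_
          rw [norm_smul, norm_smul, Real.norm_of_nonneg (by nlinarith), Real.norm_of_nonneg hc.le]
      _ ≤ (1 - c) * 1 + c * δ := by gcongr <;> nlinarith
      _ ≤ 2 * δ := by nlinarith

end Restriction

lemma exists_isOpen_weakDual_forall_norm_sub_le_mem {X : Type*} [NormedAddCommGroup X]
    [NormedSpace ℝ X] {U₀ : Set (WeakDual ℝ X)} (hU₀ : IsOpen U₀) {f₀ : StrongDual ℝ X}
    (hf₀ : StrongDual.toWeakDual f₀ ∈ U₀) :
    ∃ U : Set (WeakDual ℝ X), IsOpen U ∧ StrongDual.toWeakDual f₀ ∈ U ∧ ∃ η > 0,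
      ∀ g f : StrongDual ℝ X, StrongDual.toWeakDual g ∈ U → ‖f - g‖ ≤ η →
        StrongDual.toWeakDual f ∈ U₀ := by
  -- `(p, q) ↦ p + q` is continuous from `w* × norm` to `w*`, and maps `(f₀, 0)` into `U₀`.
  have hcont : Continuous fun pq : WeakDual ℝ X × StrongDual ℝ X =>
      pq.1 + StrongDual.toWeakDual pq.2 :=
    continuous_fst.add (NormedSpace.Dual.toWeakDual_continuous.comp continuous_snd)
  obtain ⟨U, B, hU, hB, hf₀U, h0B, hUB⟩ :=
    isOpen_prod_iff.mp (hU₀.preimage hcont) (StrongDual.toWeakDual f₀) 0 (by simpa using hf₀)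
  obtain ⟨η, hη, hηB⟩ := Metric.isOpen_iff.mp hB 0 h0B
  refine ⟨U, hU, hf₀U, η / 2, half_pos hη, fun g f hg hfg => ?_⟩
  have hball : f - g ∈ B := hηB (by rw [mem_ball_zero_iff]; linarith)
  simpa using hUB (Set.mk_mem_prod hg hball)

lemma exists_relWStarOpen_forall_exists_mem_norm_sub_le {X : Type*} [NormedAddCommGroup X]
    [NormedSpace ℝ X] (Y : Submodule ℝ X) [FiniteDimensional ℝ (StrongDual ℝ Y)]
    {V : Set (StrongDual ℝ X)} (hV : IsRelWStarOpenSub (annih Y) V) (hne : V.Nonempty)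
    {δ : ℝ} (hδ : 0 < δ) :
    ∃ W, IsRelWStarOpen X W ∧ W.Nonempty ∧ ∀ g ∈ W, ∃ f ∈ V, ‖g - f‖ ≤ δ := by
  obtain ⟨U₀, hU₀, rfl⟩ := hV
  obtain ⟨f₀, ⟨hf₀Y, hf₀1⟩, hf₀U₀⟩ := hne
  obtain ⟨U, hU, hf₀U, η, hη, hUU₀⟩ := exists_isOpen_weakDual_forall_norm_sub_le_mem hU₀ hf₀U₀
  obtain ⟨θ, hθ, hθδη⟩ : ∃ θ > 0, 2 * θ ≤ min δ η := ⟨min δ η / 2, by positivity, by linarith⟩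
  refine ⟨_, ⟨U ∩ {p | ‖dualRestrict Y (toStrongDual p)‖ < θ},
    hU.inter (isOpen_lt
      ((continuous_norm (E := StrongDual ℝ Y)).comp (continuous_dualRestrict_toStrongDual Y))
      continuous_const), rfl⟩,
    ⟨f₀, mem_closedBall_zero_iff.mpr hf₀1, hf₀U, ?_⟩, ?_⟩
  · change ‖dualRestrict Y f₀‖ < θ
    rw [(ker_dualRestrict Y).ge hf₀Y, norm_zero (E := StrongDual ℝ Y)]
    exact hθ
  · rintro g ⟨hg1, hgU, hgθ⟩
    obtain ⟨f, hf, hgf⟩ :=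
      exists_mem_subBall_annih_norm_sub_le Y (mem_closedBall_zero_iff.mp hg1)
    have hgf' : ‖g - f‖ ≤ min δ η := by
      change ‖dualRestrict Y g‖ < θ at hgθ
      linarith
    exact ⟨f, ⟨hf, hUU₀ g f hgU (by rw [norm_sub_rev]; exact hgf'.trans (min_le_right _ _))⟩,
      hgf'.trans (min_le_left _ _)⟩

theorem statement_16_general (X : Type*) [NormedAddCommGroup X] [NormedSpace ℝ X]
    (Y : Submodule ℝ X)
    (hfin : FiniteDimensional ℝ (StrongDual ℝ X ⧸ annih Y))
    (hBHP : SubWStarBHP (annih Y)) :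
    WStarBHP X := by
  have := finiteDimensional_dual_of_finiteDimensional_quotient_annih Y
  intro ε hε
  obtain ⟨V, hV, hne, hdiam⟩ := hBHP (ε / 2) (half_pos hε)
  obtain ⟨W, hW, hWne, hWV⟩ :=
    exists_relWStarOpen_forall_exists_mem_norm_sub_le Y hV hne (show 0 < ε / 8 by positivity)
  have hVbdd : Bornology.IsBounded V := by
    obtain ⟨U₀, -, rfl⟩ := hV
    exact (isBounded_closedBall (x := 0) (r := 1)).subset fun f ⟨⟨_, hf⟩, _⟩ =>
      mem_closedBall_zero_iff.mpr hf
  refine ⟨W, hW, hWne, ?_⟩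
  have := diam_le_diam_add_of_forall_exists_dist_le hVbdd (by positivity : (0 : ℝ) ≤ ε / 8)
    fun g hg => by simpa only [dist_eq_norm] using hWV g hg
  linarith

/-- If `Y` is a closed subspace of a Banach space `X` with `X*/Y^⊥` finite
dimensional and `Y^⊥` has the w*-BHP, then `X*` has the w*-BHP. -/
theorem statement_16 (X : Type*) [NormedAddCommGroup X] [NormedSpace ℝ X] [CompleteSpace X]
    (Y : Submodule ℝ X) (hY : IsClosed (Y : Set X))
    (hfin : FiniteDimensional ℝ (StrongDual ℝ X ⧸ annih Y))
    (hBHP : SubWStarBHP (annih Y)) :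
    WStarBHP X :=
  statement_16_general X Y hfin hBHP
end
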